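/- arXiv:1710.09047 — 3 statements merged into one kernel-verified Lean document; each statement's English description precedes it below -/
import Mathlib

section
/- Let 0 < α < 1/L. Then for each s = 1,…,p the block gradient map g^s_{αf} : ℝⁿ → ℝⁿ defined by g^s_{αf}(x) = x − α U_s ∇_s f(x) is a diffeomorphism of ℝⁿ, i.e. a continuously differentiable bijection whose inverse is continuously differentiable. -/
open Matrix MeasureTheory Filter Topology

noncomputable section

/-- A map is a (C¹) diffeomorphism if it is continuously differentiable, bijective,
and its inverse is continuously differentiable. -/
def IsDiffeomorphism {E : Type*} [NormedAddCommGroup E] [NormedSpace ℝ E] (g : E → E) : Prop :=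
  ContDiff ℝ 1 g ∧ Function.Bijective g ∧ ContDiff ℝ 1 (Function.invFun g)

/-- Jacobian matrix of a self-map of a Euclidean space. -/
def jacobianMatrix {ι : Type*} [Fintype ι] [DecidableEq ι]
    (g : EuclideanSpace ℝ ι → EuclideanSpace ℝ ι) (x : EuclideanSpace ℝ ι) :
    Matrix ι ι ℝ :=
  Matrix.of fun i j => fderiv ℝ g x (EuclideanSpace.single j 1) i

/-- The Hessian matrix of `f` at `x` (Jacobian of the gradient). -/
def hessianMatrix {ι : Type*} [Fintype ι] [DecidableEq ι]
    (f : EuclideanSpace ℝ ι → ℝ) (x : EuclideanSpace ℝ ι) : Matrix ι ι ℝ :=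
  jacobianMatrix (gradient f) x

/-- `z` is an eigenvalue (over `ℂ`) of the real matrix `M`. -/
def IsEigenvalue {ι : Type*} [Fintype ι] (M : Matrix ι ι ℝ) (z : ℂ) : Prop :=
  ∃ v : ι → ℂ, v ≠ 0 ∧ (M.map Complex.ofReal).mulVec v = z • v

/-- A real matrix has a negative (real) eigenvalue. -/
def HasNegEigenvalue {ι : Type*} [Fintype ι] (M : Matrix ι ι ℝ) : Prop :=
  ∃ (c : ℝ) (v : ι → ℝ), c < 0 ∧ v ≠ 0 ∧ M.mulVec v = c • v

/-- Strict saddle point: critical point whose Hessian has a negative eigenvalue. -/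
def IsStrictSaddle {ι : Type*} [Fintype ι] [DecidableEq ι]
    (f : EuclideanSpace ℝ ι → ℝ) (x : EuclideanSpace ℝ ι) : Prop :=
  gradient f x = 0 ∧ HasNegEigenvalue (hessianMatrix f x)

/-- The block-gradient-descent step `g^s_{αf}(x) = x - α U_s ∇_s f(x)`. -/
def blockGradStep {n p : ℕ} (f : EuclideanSpace ℝ (Fin n) → ℝ) (α : ℝ)
    (blk : Fin n → Fin p) (s : Fin p) (x : EuclideanSpace ℝ (Fin n)) :
    EuclideanSpace ℝ (Fin n) :=
  (WithLp.equiv 2 (Fin n → ℝ)).symm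
    fun i => x i - if blk i = s then α * gradient f x i else 0

/-- The BCGD map `g_{αf} = g^p ∘ ⋯ ∘ g^1` (block 1 is applied first). -/
def bcgdMap {n p : ℕ} (f : EuclideanSpace ℝ (Fin n) → ℝ) (α : ℝ)
    (blk : Fin n → Fin p) (x : EuclideanSpace ℝ (Fin n)) : EuclideanSpace ℝ (Fin n) :=
  (List.finRange p).foldl (fun y s => blockGradStep f α blk s y) x

/-- The projection matrix `U_s U_sᵀ` onto the coordinates of block `s`. -/
def blockProj {n p : ℕ} (blk : Fin n → Fin p) (s : Fin p) : Matrix (Fin n) (Fin n) ℝ :=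
  Matrix.diagonal fun i => if blk i = s then 1 else 0

/-- Strictly block lower triangular part of a matrix. -/
def lowerBlockPart {n p : ℕ} (blk : Fin n → Fin p) (A : Matrix (Fin n) (Fin n) ℝ) :
    Matrix (Fin n) (Fin n) ℝ :=
  Matrix.of fun i j => if blk j < blk i then A i j else 0

/-- Strictly block upper triangular part of a matrix. -/
def upperBlockPart {n p : ℕ} (blk : Fin n → Fin p) (A : Matrix (Fin n) (Fin n) ℝ) :
    Matrix (Fin n) (Fin n) ℝ :=
  Matrix.of fun i j => if blk i < blk j then A i j else 0

/-- Spectral radius of a real matrix: the largest modulus of its complex eigenvalues. -/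
def specRad {ι : Type*} [Fintype ι] (M : Matrix ι ι ℝ) : ℝ :=
  sSup {r : ℝ | ∃ z : ℂ, IsEigenvalue M z ∧ r = ‖z‖}


/-! A step of block gradient descent is a perturbation `x ↦ x - φ x` of the identity by the map
`φ = α U_s U_sᵀ ∇f`, which is `C¹` and `αL`-Lipschitz with `αL < 1`. Such a map approximates the
identity with constant `αL`, hence is a homeomorphism of the whole space; its derivative
`1 - φ'(x)` has `‖φ'(x)‖ ≤ αL < 1`, hence is invertible by the Neumann series, so the inverse is
`C¹` as well. -/

open scoped NNReal

theorem IsDiffeomorphism.of_homeomorph {E : Type*} [NormedAddCommGroup E] [NormedSpace ℝ E]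
    [CompleteSpace E] (e : E ≃ₜ E) {e' : E → E ≃L[ℝ] E}
    (he' : ∀ a, HasFDerivAt e (e' a : E →L[ℝ] E) a) (he : ContDiff ℝ 1 e) :
    IsDiffeomorphism e := by
  have hinv : Function.invFun e = e.symm :=
    Function.invFun_eq_of_injective_of_rightInverse e.injective e.apply_symm_apply
  exact ⟨he, e.bijective, hinv ▸ e.contDiff_symm he' he⟩

section PerturbationOfIdentity

variable {𝕜 : Type*} [NontriviallyNormedField 𝕜] {E : Type*} [NormedAddCommGroup E]
  [NormedSpace 𝕜 E] {φ : E → E} {K : ℝ≥0}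

theorem approximatesLinearOn_id_sub (hφ : LipschitzWith K φ) :
    ApproximatesLinearOn (fun x => x - φ x) (ContinuousLinearMap.id 𝕜 E) Set.univ K := by
  refine LipschitzOnWith.approximatesLinearOn ?_
  have : ((fun x => x - φ x) - ⇑(ContinuousLinearMap.id 𝕜 E)) = -φ :=
    funext fun x => sub_sub_cancel_left x (φ x)
  exact this ▸ hφ.neg.lipschitzOnWith

theorem HasFDerivAt.id_sub_of_norm_lt_one [CompleteSpace E] {φ' : E →L[𝕜] E} {a : E}
    (hφ : HasFDerivAt φ φ' a) (hφ' : ‖φ'‖ < 1) :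
    HasFDerivAt (fun x => x - φ x)
      (ContinuousLinearEquiv.unitsEquiv 𝕜 E (Units.oneSub φ' hφ') : E →L[𝕜] E) a :=
  (hasFDerivAt_id a).sub hφ

end PerturbationOfIdentity

section RealPerturbationOfIdentity

variable {E : Type*} [NormedAddCommGroup E] [NormedSpace ℝ E] [CompleteSpace E]
  {φ : E → E} {K : ℝ≥0}

def Homeomorph.idSub (hφ : LipschitzWith K φ) (hK : K < 1) : E ≃ₜ E :=
  (approximatesLinearOn_id_sub hφ).toHomeomorph (f' := ContinuousLinearEquiv.refl ℝ E) _ <| by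
    rcases subsingleton_or_nontrivial E with h | h
    · exact .inl h
    · right
      simpa using hK

theorem Homeomorph.coe_idSub (hφ : LipschitzWith K φ) (hK : K < 1) :
    ⇑(Homeomorph.idSub hφ hK) = fun x => x - φ x :=
  rfl

theorem isDiffeomorphism_id_sub (hK : K < 1) (hφ : LipschitzWith K φ) (hφc : ContDiff ℝ 1 φ) :
    IsDiffeomorphism (fun x => x - φ x) := by
  have hφ' (a : E) : HasFDerivAt φ (fderiv ℝ φ a) a :=
    (hφc.differentiable one_ne_zero a).hasFDerivAt
  have hnorm (a : E) : ‖fderiv ℝ φ a‖ < 1 := ((hφ' a).le_of_lipschitz hφ).trans_lt hK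
  rw [← Homeomorph.coe_idSub hφ hK]
  exact IsDiffeomorphism.of_homeomorph _ (fun a => (hφ' a).id_sub_of_norm_lt_one (hnorm a))
    (contDiff_id.sub hφc)

end RealPerturbationOfIdentity

theorem ContDiff.gradient {F : Type*} [NormedAddCommGroup F] [InnerProductSpace ℝ F]
    [CompleteSpace F] {f : F → ℝ} {m n : WithTop ℕ∞} (hf : ContDiff ℝ n f) (hmn : m + 1 ≤ n) :
    ContDiff ℝ m (gradient f) :=
  (InnerProductSpace.toDual ℝ F).symm.contDiff.comp (hf.fderiv_right hmn)

section BlockProjection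

variable {n p : ℕ} (blk : Fin n → Fin p) (s : Fin p)

theorem toEuclideanCLM_blockProj_apply (v : EuclideanSpace ℝ (Fin n)) (i : Fin n) :
    toEuclideanCLM (𝕜 := ℝ) (blockProj blk s) v i = if blk i = s then v i else 0 := by
  simp [blockProj, Matrix.mulVec_diagonal]

theorem norm_toEuclideanCLM_blockProj_apply_le (v : EuclideanSpace ℝ (Fin n)) :
    ‖toEuclideanCLM (𝕜 := ℝ) (blockProj blk s) v‖ ≤ ‖v‖ := by
  simp only [EuclideanSpace.norm_eq, toEuclideanCLM_blockProj_apply]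
  gcongr with i
  split_ifs <;> simp

theorem norm_toEuclideanCLM_blockProj_le : ‖toEuclideanCLM (𝕜 := ℝ) (blockProj blk s)‖ ≤ 1 :=
  ContinuousLinearMap.opNorm_le_bound _ zero_le_one fun v => by
    simpa using norm_toEuclideanCLM_blockProj_apply_le blk s v

theorem blockGradStep_eq_id_sub (f : EuclideanSpace ℝ (Fin n) → ℝ) (α : ℝ) :
    blockGradStep f α blk s =
      fun x => x - α • toEuclideanCLM (𝕜 := ℝ) (blockProj blk s) (gradient f x) := by
  funext x
  ext i
  simp [blockGradStep, toEuclideanCLM_blockProj_apply]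

end BlockProjection

theorem blockGradStep_isDiffeomorphism_general
    {n p : ℕ} (blk : Fin n → Fin p)
    (f : EuclideanSpace ℝ (Fin n) → ℝ) (hf : ContDiff ℝ 2 f)
    (L : ℝ) (hlip : LipschitzWith (Real.toNNReal L) (gradient f))
    (α : ℝ) (hα : 0 < α) (hα' : α < 1 / L) :
    ∀ s : Fin p, IsDiffeomorphism (blockGradStep f α blk s) := by
  intro s
  set P := toEuclideanCLM (𝕜 := ℝ) (blockProj blk s)
  have hL : 0 < L := one_div_pos.mp (hα.trans hα')
  have hαL : α * L < 1 := (lt_div_iff₀ hL).mp hα'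
  have hlipφ := (lipschitzWith_smul α).comp (P.lipschitz.comp hlip)
  rw [blockGradStep_eq_id_sub]
  refine isDiffeomorphism_id_sub ?_ hlipφ ((P.contDiff.comp (hf.gradient le_rfl)).const_smul α)
  rw [← NNReal.coe_lt_coe]
  calc (‖α‖₊ * (‖P‖₊ * L.toNNReal) : ℝ) = α * (‖P‖ * L) := by
        simp [abs_of_pos hα, Real.coe_toNNReal L hL.le]
    _ ≤ α * (1 * L) := by gcongr; exact norm_toEuclideanCLM_blockProj_le blk s
    _ < 1 := by rwa [one_mul]

/-- each block gradient map `g^s_{αf}` is a diffeomorphism of ℝⁿ. -/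
theorem blockGradStep_isDiffeomorphism
    {n p : ℕ} (hp : 0 < p) (blk : Fin n → Fin p)
    (hmono : Monotone blk) (hsurj : Function.Surjective blk)
    (f : EuclideanSpace ℝ (Fin n) → ℝ) (hf : ContDiff ℝ 2 f)
    (L : ℝ) (hL : 0 < L) (hlip : LipschitzWith (Real.toNNReal L) (gradient f))
    (α : ℝ) (hα : 0 < α) (hα' : α < 1 / L) :
    ∀ s : Fin p, IsDiffeomorphism (blockGradStep f α blk s) :=
  blockGradStep_isDiffeomorphism_general blk f hf L hlip α hα hα'

end
end

section
/- Let 0 < α < 1/L and let the sequence (x_k) be generated by block coordinate gradient descent, i.e. x_{k+1} = g_{αf}(x_k). If the limit x* = lim_{k→∞} x_k exists, then x* is a critical point of f, i.e. ∇f(x*) = 0. -/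
open Matrix MeasureTheory Filter Topology

noncomputable section

/-!
The BCGD map is continuous (each block step is, since `∇f` is Lipschitz), so the limit of its
iterates is a fixed point. Each block step only moves the coordinates of its own block, and no
later step touches them again; hence a fixed point of the composition is fixed by every block step,
i.e. `x = x - α U_s ∇_s f(x)` for all `s`, and `α ≠ 0` forces `∇f(x) = 0`.
-/

namespace List

variable {ι κ : Type*} {β : ι → Type*} {q : ENNReal} {blk : ι → κ}
  {T : κ → PiLp q β → PiLp q β}

theorem foldl_apply_of_notMem (hT : ∀ s y i, blk i ≠ s → T s y i = y i)
    {l : List κ} {i : ι} (hi : blk i ∉ l) (y : PiLp q β) :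
    l.foldl (fun z s => T s z) y i = y i := by
  induction l generalizing y with
  | nil => rfl
  | cons a l ih =>
    rw [mem_cons, not_or] at hi
    rw [foldl_cons, ih hi.2, hT a y i hi.1]

theorem apply_eq_self_of_foldl_eq_self (hT : ∀ s y i, blk i ≠ s → T s y i = y i)
    {l : List κ} (hl : l.Nodup) {y : PiLp q β} (hy : l.foldl (fun z s => T s z) y = y) :
    ∀ s ∈ l, T s y = y := by
  induction l with
  | nil => simp
  | cons a l ih =>
    rw [nodup_cons] at hl
    rw [foldl_cons] at hy
    -- block `a` is untouched after `T a`, so the fixed point already agrees with `T a y` there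
    have hTa : T a y = y := by
      ext i
      by_cases hi : blk i = a
      · rw [← foldl_apply_of_notMem hT (hi ▸ hl.1) (T a y), hy]
      · exact hT a y i hi
    rw [hTa] at hy
    intro s hs
    rcases mem_cons.mp hs with rfl | hs
    · exact hTa
    · exact ih hl.2 hy s hs

end List

variable {n p : ℕ} {f : EuclideanSpace ℝ (Fin n) → ℝ} {α : ℝ} {blk : Fin n → Fin p}

theorem blockGradStep_apply (s : Fin p) (x : EuclideanSpace ℝ (Fin n)) (i : Fin n) :
    blockGradStep f α blk s x i = x i - if blk i = s then α * gradient f x i else 0 :=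
  rfl

theorem blockGradStep_apply_of_ne {s : Fin p} {i : Fin n} (h : blk i ≠ s)
    (x : EuclideanSpace ℝ (Fin n)) : blockGradStep f α blk s x i = x i := by
  rw [blockGradStep_apply, if_neg h, sub_zero]

theorem continuous_blockGradStep (hf : Continuous (gradient f)) (s : Fin p) :
    Continuous (blockGradStep f α blk s) := by
  refine (PiLp.continuous_toLp 2 _).comp (continuous_pi fun i => ?_)
  have hcoord : Continuous fun x : EuclideanSpace ℝ (Fin n) => x i :=
    (continuous_apply i).comp (PiLp.continuous_ofLp 2 _)
  split_ifs
  · exact hcoord.sub (continuous_const.mul (hcoord.comp hf))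
  · exact hcoord.sub continuous_const

theorem continuous_bcgdMap (hf : Continuous (gradient f)) : Continuous (bcgdMap f α blk) := by
  suffices ∀ l : List (Fin p), Continuous fun x => l.foldl (fun y s => blockGradStep f α blk s y) x
    from this _
  intro l
  induction l with
  | nil => exact continuous_id
  | cons s l ih => exact ih.comp (continuous_blockGradStep hf s)

theorem blockGradStep_eq_self_of_bcgdMap_eq_self {x : EuclideanSpace ℝ (Fin n)}
    (hx : bcgdMap f α blk x = x) (s : Fin p) : blockGradStep f α blk s x = x :=
  List.apply_eq_self_of_foldl_eq_self (fun _ _ _ h => blockGradStep_apply_of_ne h _)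
    (List.nodup_finRange p) hx s (List.mem_finRange s)

theorem gradient_eq_zero_of_bcgdMap_eq_self (hα : α ≠ 0) {x : EuclideanSpace ℝ (Fin n)}
    (hx : bcgdMap f α blk x = x) : gradient f x = 0 := by
  ext i
  have hi := congrArg (· i) (blockGradStep_eq_self_of_bcgdMap_eq_self hx (blk i))
  simpa [blockGradStep_apply, hα] using hi

theorem bcgd_limit_is_critical_point_general
    {n p : ℕ} (blk : Fin n → Fin p)
    (f : EuclideanSpace ℝ (Fin n) → ℝ)
    (L : ℝ) (hlip : LipschitzWith (Real.toNNReal L) (gradient f))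
    (α : ℝ) (hα : 0 < α)
    (x : ℕ → EuclideanSpace ℝ (Fin n))
    (hx : ∀ k, x (k + 1) = bcgdMap f α blk (x k))
    (xs : EuclideanSpace ℝ (Fin n)) (hlim : Tendsto x atTop (nhds xs)) :
    gradient f xs = 0 := by
  have hiter : x = fun k => (bcgdMap f α blk)^[k] (x 0) := by
    funext k
    induction k with
    | zero => rfl
    | succ k ih => rw [hx, ih, Function.iterate_succ_apply']
  have hfix : bcgdMap f α blk xs = xs :=
    isFixedPt_of_tendsto_iterate (hiter ▸ hlim) (continuous_bcgdMap hlip.continuous).continuousAt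
  exact gradient_eq_zero_of_bcgdMap_eq_self hα.ne' hfix

/-- if the BCGD iterates converge, the limit is a critical point of `f`. -/
theorem bcgd_limit_is_critical_point
    {n p : ℕ} (hp : 0 < p) (blk : Fin n → Fin p)
    (hmono : Monotone blk) (hsurj : Function.Surjective blk)
    (f : EuclideanSpace ℝ (Fin n) → ℝ) (hf : ContDiff ℝ 2 f)
    (L : ℝ) (hL : 0 < L) (hlip : LipschitzWith (Real.toNNReal L) (gradient f))
    (α : ℝ) (hα : 0 < α) (hα' : α < 1 / L)
    (x : ℕ → EuclideanSpace ℝ (Fin n))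
    (hx : ∀ k, x (k + 1) = bcgdMap f α blk (x k))
    (xs : EuclideanSpace ℝ (Fin n)) (hlim : Tendsto x atTop (nhds xs)) :
    gradient f xs = 0 :=
  bcgd_limit_is_critical_point_general blk f L hlip α hα x hx xs hlim
end
end

section
/- Let B ∈ ℝ^{n×n} be symmetric with spectral radius ρ(B), and let B̌ and B̂ be its strictly block lower and strictly block upper triangular parts with respect to the given block partition. Then for every vector η ∈ ℂⁿ with ‖η‖ = 1, both −ρ(B) ≤ Re(η^H B̌ η) ≤ ρ(B) and −ρ(B) ≤ Re(η^H B̂ η) ≤ ρ(B) hold, where η^H denotes the conjugate transpose. -/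
open Matrix MeasureTheory Filter Topology

noncomputable section

/-!
Writing `η = a + i b` with `a, b` real, `Re (η^H M η) = aᵀ M a + bᵀ M b` for every real `M`,
so it suffices to bound the real quadratic form of `B̌` (that of `B̂` is the same, as
`B̂ = B̌ᵀ`). Splitting `B = B̌ + B̂ + D` with `D` the block diagonal part gives
`2 xᵀ B̌ x = xᵀ B x - xᵀ D x`, and `xᵀ D x = ∑ₛ x_sᵀ B x_s` over the block restrictions `x_s`
of `x`. For symmetric `B` the spectral theorem bounds `|yᵀ B y|` by `ρ(B) ‖y‖²`, so both terms
are bounded by `ρ(B) ‖x‖²`.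
-/

open Module.End

theorem LinearMap.IsSymmetric.norm_inner_self_apply_le {𝕜 E : Type*} [RCLike 𝕜]
    [NormedAddCommGroup E] [InnerProductSpace 𝕜 E] [FiniteDimensional 𝕜 E] {T : E →ₗ[𝕜] E}
    (hT : T.IsSymmetric) {c : ℝ} (hc : ∀ μ : 𝕜, HasEigenvalue T μ → ‖μ‖ ≤ c) (v : E) :
    ‖inner 𝕜 v (T v)‖ ≤ c * ‖v‖ ^ 2 := by
  set b := hT.eigenvectorBasis rfl
  set r := b.repr v
  have hbound : ∀ i, |hT.eigenvalues rfl i| ≤ c := fun i => by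
    simpa using hc _ (hT.hasEigenvalue_eigenvalues rfl i)
  have hinner : inner 𝕜 v (T v) = ∑ i, (hT.eigenvalues rfl i : 𝕜) * (‖r i‖ ^ 2 : ℝ) := by
    rw [← b.repr.inner_map_map, PiLp.inner_apply]
    refine Finset.sum_congr rfl fun i _ => ?_
    rw [hT.eigenvectorBasis_apply_self_apply, RCLike.ofReal_pow, ← RCLike.conj_mul]
    simp only [RCLike.inner_apply, r]
    ring
  calc ‖inner 𝕜 v (T v)‖ ≤ ∑ i, |hT.eigenvalues rfl i| * ‖r i‖ ^ 2 := by
        rw [hinner]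
        refine (norm_sum_le _ _).trans_eq (Finset.sum_congr rfl fun i _ => ?_)
        rw [norm_mul, RCLike.norm_ofReal, RCLike.norm_ofReal, abs_pow, abs_norm]
    _ ≤ ∑ i, c * ‖r i‖ ^ 2 := by gcongr with i; exact hbound i
    _ = c * ‖v‖ ^ 2 := by rw [← Finset.mul_sum, ← EuclideanSpace.norm_sq_eq, b.repr.norm_map]

section SpectralRadius

variable {ι : Type*} [Fintype ι]

open scoped Matrix.Norms.Operator in
theorem bddAbove_norm_isEigenvalue (M : Matrix ι ι ℝ) :
    BddAbove {r : ℝ | ∃ z : ℂ, IsEigenvalue M z ∧ r = ‖z‖} := by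
  refine ⟨‖M.map Complex.ofReal‖, ?_⟩
  rintro _ ⟨z, ⟨v, hv, hMv⟩, rfl⟩
  have h : ‖z‖ * ‖v‖ ≤ ‖M.map Complex.ofReal‖ * ‖v‖ := by
    rw [← norm_smul, ← hMv]
    exact linfty_opNorm_mulVec _ _
  exact le_of_mul_le_mul_right h (norm_pos_iff.2 hv)

theorem IsEigenvalue.norm_le_specRad {M : Matrix ι ι ℝ} {z : ℂ} (h : IsEigenvalue M z) :
    ‖z‖ ≤ specRad M :=
  le_csSup (bddAbove_norm_isEigenvalue M) ⟨z, h, rfl⟩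

theorem isEigenvalue_ofReal {M : Matrix ι ι ℝ} {μ : ℝ} {v : ι → ℝ} (hv : v ≠ 0)
    (h : M *ᵥ v = μ • v) : IsEigenvalue M μ := by
  refine ⟨fun i => v i, fun h0 => hv (funext fun i => by simpa using congrFun h0 i), ?_⟩
  funext i
  simpa [mulVec, dotProduct] using congrArg Complex.ofReal (congrFun h i)

theorem abs_dotProduct_mulVec_le_specRad_mul {A : Matrix ι ι ℝ} (hA : A.IsSymm) (x : ι → ℝ) :
    |x ⬝ᵥ A *ᵥ x| ≤ specRad A * (x ⬝ᵥ x) := by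
  classical
  have hT : (toEuclideanLin A).IsSymmetric :=
    isSymmetric_toEuclideanLin_iff.2 (isHermitian_iff_isSymm.2 hA)
  have hc : ∀ μ : ℝ, HasEigenvalue (toEuclideanLin A) μ → ‖μ‖ ≤ specRad A := by
    intro μ hμ
    obtain ⟨v, hv, hv0⟩ := hμ.exists_hasEigenvector
    have hAv : A *ᵥ v.ofLp = μ • v.ofLp := congrArg WithLp.ofLp (mem_eigenspace_iff.1 hv)
    simpa using (isEigenvalue_ofReal (by simpa using hv0) hAv).norm_le_specRad
  have := hT.norm_inner_self_apply_le hc (WithLp.toLp 2 x)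
  rwa [← real_inner_self_eq_norm_sq, Real.norm_eq_abs, real_inner_comm,
    EuclideanSpace.inner_eq_star_dotProduct, EuclideanSpace.inner_eq_star_dotProduct,
    star_trivial] at this

end SpectralRadius

section BlockParts

variable {ι κ : Type*} [Fintype ι] [Fintype κ]

def blockDiagPart {R : Type*} [Zero R] [DecidableEq κ] (blk : ι → κ) (A : Matrix ι ι R) :
    Matrix ι ι R :=
  of fun i j => if blk i = blk j then A i j else 0

theorem dotProduct_mulVec_blockDiagPart {R : Type*} [CommSemiring R] [DecidableEq κ]
    (blk : ι → κ) (A : Matrix ι ι R) (x : ι → R) :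
    x ⬝ᵥ blockDiagPart blk A *ᵥ x =
      ∑ s : κ, (blk ⁻¹' {s}).indicator x ⬝ᵥ A *ᵥ (blk ⁻¹' {s}).indicator x := by
  simp only [dotProduct, mulVec, blockDiagPart, of_apply, Finset.mul_sum]
  conv_rhs => rw [Finset.sum_comm]; enter [2, i]; rw [Finset.sum_comm]
  refine Finset.sum_congr rfl fun i _ => Finset.sum_congr rfl fun j _ => ?_
  rw [Fintype.sum_eq_single (blk i) fun s hs => by simp [Set.indicator_of_notMem, Ne.symm hs]]
  by_cases h : blk i = blk j
  · simp [h]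
  · simp [h, Set.indicator_of_notMem, Ne.symm h]

theorem dotProduct_self_eq_sum_indicator {R : Type*} [CommSemiring R] (blk : ι → κ)
    (x : ι → R) :
    x ⬝ᵥ x = ∑ s : κ, (blk ⁻¹' {s}).indicator x ⬝ᵥ (blk ⁻¹' {s}).indicator x := by
  simp only [dotProduct]
  rw [Finset.sum_comm (γ := κ)]
  refine Finset.sum_congr rfl fun i _ => ?_
  rw [Fintype.sum_eq_single (blk i) fun s hs => by simp [Set.indicator_of_notMem, Ne.symm hs]]
  simp

theorem abs_dotProduct_mulVec_blockDiagPart_le [DecidableEq κ] (blk : ι → κ)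
    {A : Matrix ι ι ℝ} {c : ℝ} (hA : ∀ y, |y ⬝ᵥ A *ᵥ y| ≤ c * (y ⬝ᵥ y)) (x : ι → ℝ) :
    |x ⬝ᵥ blockDiagPart blk A *ᵥ x| ≤ c * (x ⬝ᵥ x) := by
  rw [dotProduct_mulVec_blockDiagPart, dotProduct_self_eq_sum_indicator blk x, Finset.mul_sum]
  exact (Finset.abs_sum_le_sum_abs _ _).trans (Finset.sum_le_sum fun s _ => hA _)

end BlockParts

section TriangularParts

variable {n p : ℕ} (blk : Fin n → Fin p)

theorem lowerBlockPart_add_upperBlockPart_add_blockDiagPart (A : Matrix (Fin n) (Fin n) ℝ) :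
    lowerBlockPart blk A + upperBlockPart blk A + blockDiagPart blk A = A := by
  ext i j
  simp only [Matrix.add_apply, lowerBlockPart, upperBlockPart, blockDiagPart, of_apply]
  rcases lt_trichotomy (blk i) (blk j) with h | h | h
  · simp [h, h.not_gt, h.ne]
  · simp [h]
  · simp [h, h.not_gt, h.ne']

theorem upperBlockPart_eq_transpose_lowerBlockPart {A : Matrix (Fin n) (Fin n) ℝ}
    (hA : A.IsSymm) : upperBlockPart blk A = (lowerBlockPart blk A)ᵀ := by
  ext i j
  simp [upperBlockPart, lowerBlockPart, hA.apply i j]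

theorem dotProduct_mulVec_upperBlockPart {A : Matrix (Fin n) (Fin n) ℝ} (hA : A.IsSymm)
    (x : Fin n → ℝ) : x ⬝ᵥ upperBlockPart blk A *ᵥ x = x ⬝ᵥ lowerBlockPart blk A *ᵥ x := by
  rw [upperBlockPart_eq_transpose_lowerBlockPart blk hA, mulVec_transpose, dotProduct_comm,
    dotProduct_mulVec]

theorem abs_dotProduct_mulVec_lowerBlockPart_le {A : Matrix (Fin n) (Fin n) ℝ} (hA : A.IsSymm)
    {c : ℝ} (hc : ∀ y, |y ⬝ᵥ A *ᵥ y| ≤ c * (y ⬝ᵥ y)) (x : Fin n → ℝ) :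
    |x ⬝ᵥ lowerBlockPart blk A *ᵥ x| ≤ c * (x ⬝ᵥ x) := by
  have hsplit := congrArg (fun M => x ⬝ᵥ M *ᵥ x)
    (lowerBlockPart_add_upperBlockPart_add_blockDiagPart blk A)
  simp only [add_mulVec, dotProduct_add, dotProduct_mulVec_upperBlockPart blk hA] at hsplit
  have hD := abs_dotProduct_mulVec_blockDiagPart_le blk hc x
  have hB := hc x
  rw [abs_le] at hD hB ⊢
  constructor <;> linarith

end TriangularParts

section ComplexQuadraticForm

variable {ι : Type*} [Fintype ι]

theorem re_star_dotProduct_map_ofReal_mulVec (M : Matrix ι ι ℝ) (η : ι → ℂ) :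
    (star η ⬝ᵥ M.map Complex.ofReal *ᵥ η).re =
      (fun i => (η i).re) ⬝ᵥ M *ᵥ (fun i => (η i).re) +
        (fun i => (η i).im) ⬝ᵥ M *ᵥ (fun i => (η i).im) := by
  simp only [dotProduct, mulVec, map_apply, Pi.star_apply, Finset.mul_sum, Complex.re_sum,
    ← Finset.sum_add_distrib]
  refine Finset.sum_congr rfl fun i _ => Finset.sum_congr rfl fun j _ => ?_
  simp only [Complex.mul_re, Complex.mul_im, Complex.conj_re, Complex.conj_im,
    Complex.ofReal_re, Complex.ofReal_im, RCLike.star_def]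
  ring

theorem abs_re_star_dotProduct_map_ofReal_mulVec_le {M : Matrix ι ι ℝ} {c : ℝ}
    (hM : ∀ x, |x ⬝ᵥ M *ᵥ x| ≤ c * (x ⬝ᵥ x)) (η : ι → ℂ) :
    |(star η ⬝ᵥ M.map Complex.ofReal *ᵥ η).re| ≤ c * ∑ i, ‖η i‖ ^ 2 := by
  have hnorm : ∑ i, ‖η i‖ ^ 2 =
      (fun i => (η i).re) ⬝ᵥ (fun i => (η i).re) + (fun i => (η i).im) ⬝ᵥ (fun i => (η i).im) := by
    simp only [dotProduct, ← Finset.sum_add_distrib, Complex.sq_norm, Complex.normSq_apply]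
  rw [re_star_dotProduct_map_ofReal_mulVec, hnorm, mul_add]
  exact (abs_add_le _ _).trans (add_le_add (hM _) (hM _))

end ComplexQuadraticForm

theorem re_quadratic_form_triangular_parts_bounded_general
    {n p : ℕ} (blk : Fin n → Fin p)
    (B : Matrix (Fin n) (Fin n) ℝ) (hB : B.IsSymm)
    (η : Fin n → ℂ) (hη : ∑ i, ‖η i‖ ^ 2 = 1) :
    (-specRad B ≤ (star η ⬝ᵥ ((lowerBlockPart blk B).map Complex.ofReal).mulVec η).re ∧
        (star η ⬝ᵥ ((lowerBlockPart blk B).map Complex.ofReal).mulVec η).re ≤ specRad B) ∧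
      (-specRad B ≤ (star η ⬝ᵥ ((upperBlockPart blk B).map Complex.ofReal).mulVec η).re ∧
        (star η ⬝ᵥ ((upperBlockPart blk B).map Complex.ofReal).mulVec η).re ≤ specRad B) := by
  have hlower := abs_dotProduct_mulVec_lowerBlockPart_le blk hB
    (abs_dotProduct_mulVec_le_specRad_mul hB)
  have hupper : ∀ x, |x ⬝ᵥ upperBlockPart blk B *ᵥ x| ≤ specRad B * (x ⬝ᵥ x) := fun x => by
    rw [dotProduct_mulVec_upperBlockPart blk hB]
    exact hlower x
  have hL := abs_re_star_dotProduct_map_ofReal_mulVec_le hlower η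
  have hU := abs_re_star_dotProduct_map_ofReal_mulVec_le hupper η
  rw [hη, mul_one] at hL hU
  exact ⟨abs_le.1 hL, abs_le.1 hU⟩

/-- for any unit vector `η ∈ ℂⁿ`, the real parts of `η^H B̌ η` and
`η^H B̂ η` are bounded in absolute value by the spectral radius of `B`. -/
theorem re_quadratic_form_triangular_parts_bounded
    {n p : ℕ} (hp : 0 < p) (blk : Fin n → Fin p)
    (hmono : Monotone blk) (hsurj : Function.Surjective blk)
    (B : Matrix (Fin n) (Fin n) ℝ) (hB : B.IsSymm)
    (η : Fin n → ℂ) (hη : ∑ i, ‖η i‖ ^ 2 = 1) :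
    (-specRad B ≤ (star η ⬝ᵥ ((lowerBlockPart blk B).map Complex.ofReal).mulVec η).re ∧
        (star η ⬝ᵥ ((lowerBlockPart blk B).map Complex.ofReal).mulVec η).re ≤ specRad B) ∧
      (-specRad B ≤ (star η ⬝ᵥ ((upperBlockPart blk B).map Complex.ofReal).mulVec η).re ∧
        (star η ⬝ᵥ ((upperBlockPart blk B).map Complex.ofReal).mulVec η).re ≤ specRad B) :=
  re_quadratic_form_triangular_parts_bounded_general blk B hB η hη

end
end
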